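/- arXiv:2311.09038 — 9 statements merged into one kernel-verified Lean document; each statement's English description precedes it below -/
import Mathlib

section
/- The convolution product on the R-module of H-invariant maps from G/H to A, defined by (φ * ψ)(gH) = Σ_{kH ∈ G/H} φ(kH) · α_k(ψ(k⁻¹gH)), is well-defined (independent of the choice of coset representatives) and associative. -/
open scoped BigOperators

/-- `φ : G/H → A` is `H`-invariant: `φ(hgH) = α_h (φ(gH))`. -/
def SkewHecke.IsInv {R A G : Type*} [CommRing R] [Ring A] [Algebra R A] [Group G]
    (H : Subgroup G) (α : G →* (A ≃ₐ[R] A)) (φ : G ⧸ H → A) : Prop :=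
  ∀ h ∈ H, ∀ g : G, φ (QuotientGroup.mk (h * g)) = α h (φ (QuotientGroup.mk g))

/-- `s` is a choice of coset representatives. -/
def SkewHecke.IsSection {G : Type*} [Group G] {H : Subgroup G} (s : G ⧸ H → G) : Prop :=
  ∀ c : G ⧸ H, QuotientGroup.mk (s c) = c

/-- The convolution product, defined using the coset representatives `s`:
`(φ * ψ)(gH) = Σ_{kH} φ(kH) · α_k (ψ(k⁻¹gH))`. -/
noncomputable def SkewHecke.conv {R A G : Type*} [CommRing R] [Ring A] [Algebra R A] [Group G]
    (H : Subgroup G) [Fintype (G ⧸ H)] (α : G →* (A ≃ₐ[R] A))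
    (s : G ⧸ H → G) (φ ψ : G ⧸ H → A) : G ⧸ H → A :=
  fun x => ∑ c : G ⧸ H, φ c * α (s c) (ψ ((s c)⁻¹ • x))

/-!
Write `g • ψ` for the twisted translate `x ↦ α g (ψ (g⁻¹ • x))`; this is a left action of `G` on
maps `G/H → A`, and `H`-invariance of `ψ` says exactly that `H` fixes `ψ`. Hence for invariant `ψ`
the translate `g • ψ` depends only on the coset `gH`, which gives independence of the
representatives, and `(φ * ψ)(x) = Σ_c φ c · (s c • ψ)(x)`. The product is `G`-equivariant in the
sense `g • (φ * ψ) = (g • φ) * ψ`; with `g ∈ H` this is invariance of `φ * ψ`, and with `g = s d`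
it turns both sides of the associativity law into `Σ_d φ d · ((s d • ψ) * χ)`.
-/

namespace SkewHecke

variable {R A G : Type*} [CommRing R] [Ring A] [Algebra R A] [Group G] {H : Subgroup G}
  (α : G →* (A ≃ₐ[R] A))

def twist (g : G) (ψ : G ⧸ H → A) : G ⧸ H → A :=
  fun x => α g (ψ (g⁻¹ • x))

@[simp]
lemma twist_apply (g : G) (ψ : G ⧸ H → A) (x : G ⧸ H) :
    twist α g ψ x = α g (ψ (g⁻¹ • x)) :=
  rfl

lemma twist_mul (g k : G) (ψ : G ⧸ H → A) :
    twist α (g * k) ψ = twist α g (twist α k ψ) := by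
  funext x
  simp only [twist_apply, map_mul, AlgEquiv.mul_apply, mul_inv_rev, mul_smul]

variable {α}

lemma isInv_iff_twist_eq {ψ : G ⧸ H → A} :
    IsInv H α ψ ↔ ∀ h ∈ H, twist α h ψ = ψ := by
  constructor
  · intro hψ h hh
    funext x
    induction x using QuotientGroup.induction_on with
    | H g =>
      rw [twist_apply, MulAction.Quotient.smul_coe, smul_eq_mul, ← hψ h hh, mul_inv_cancel_left]
  · intro hψ h hh g
    rw [← congr_fun (hψ h hh), twist_apply, MulAction.Quotient.smul_coe, smul_eq_mul,
      inv_mul_cancel_left]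

lemma twist_congr {ψ : G ⧸ H → A} (hψ : IsInv H α ψ) {g g' : G}
    (hgg' : (g : G ⧸ H) = g') : twist α g ψ = twist α g' ψ := by
  have hk : g⁻¹ * g' ∈ H := QuotientGroup.eq.mp hgg'
  rw [← mul_inv_cancel_left g g', twist_mul, isInv_iff_twist_eq.mp hψ _ hk]

variable [Fintype (G ⧸ H)]

lemma conv_apply (s : G ⧸ H → G) (φ ψ : G ⧸ H → A) (x : G ⧸ H) :
    conv H α s φ ψ x = ∑ c, φ c * twist α (s c) ψ x :=
  rfl

lemma conv_congr_section {s t : G ⧸ H → G} (hst : ∀ c, (s c : G ⧸ H) = t c)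
    (φ : G ⧸ H → A) {ψ : G ⧸ H → A} (hψ : IsInv H α ψ) :
    conv H α s φ ψ = conv H α t φ ψ := by
  funext x
  simp only [conv_apply, twist_congr hψ (hst _)]

lemma twist_conv {s : G ⧸ H → G} (hs : IsSection s) (g : G) (φ : G ⧸ H → A)
    {ψ : G ⧸ H → A} (hψ : IsInv H α ψ) :
    twist α g (conv H α s φ ψ) = conv H α s (twist α g φ) ψ := by
  funext x
  have hrep (c : G ⧸ H) : ((g * s (g⁻¹ • c) : G) : G ⧸ H) = s c := by
    rw [← smul_eq_mul, ← MulAction.Quotient.smul_coe, hs, hs, smul_inv_smul]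
  calc twist α g (conv H α s φ ψ) x
      = ∑ c, twist α g φ (g • c) * twist α (g * s c) ψ x := by
        simp only [twist_mul]
        simp only [twist_apply, conv_apply, map_sum, map_mul, inv_smul_smul]
    _ = ∑ c, twist α g φ c * twist α (g * s (g⁻¹ • c)) ψ x :=
        Fintype.sum_equiv (MulAction.toPerm g) _ _ fun c => by
          simp only [MulAction.toPerm_apply, inv_smul_smul]
    _ = conv H α s (twist α g φ) ψ x := by
        simp only [conv_apply, twist_congr hψ (hrep _)]

lemma isInv_conv {s : G ⧸ H → G} (hs : IsSection s) {φ ψ : G ⧸ H → A}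
    (hφ : IsInv H α φ) (hψ : IsInv H α ψ) : IsInv H α (conv H α s φ ψ) :=
  isInv_iff_twist_eq.mpr fun h hh => by
    rw [twist_conv hs h φ hψ, isInv_iff_twist_eq.mp hφ h hh]

lemma conv_conv_apply (s t : G ⧸ H → G) (φ ψ χ : G ⧸ H → A) (x : G ⧸ H) :
    conv H α t (conv H α s φ ψ) χ x = ∑ d, φ d * conv H α t (twist α (s d) ψ) χ x := by
  simp only [conv_apply, Finset.sum_mul, Finset.mul_sum, mul_assoc]
  exact Finset.sum_comm

lemma conv_assoc {s : G ⧸ H → G} (hs : IsSection s) (φ ψ : G ⧸ H → A) {χ : G ⧸ H → A}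
    (hχ : IsInv H α χ) :
    conv H α s (conv H α s φ ψ) χ = conv H α s φ (conv H α s ψ χ) := by
  funext x
  rw [conv_conv_apply, conv_apply s φ]
  simp only [twist_conv hs _ ψ hχ]

end SkewHecke

/-- The convolution product on `Maps(G/H,A)^H` is independent of the choice of coset
representatives, preserves `H`-invariance, and is associative. -/
theorem skewHecke_conv_wellDefined_assoc {R A G : Type*} [CommRing R] [Ring A] [Algebra R A]
    [Group G] (H : Subgroup G) [Fintype (G ⧸ H)] (α : G →* (A ≃ₐ[R] A))
    (s t : G ⧸ H → G) (hs : SkewHecke.IsSection s) (ht : SkewHecke.IsSection t)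
    (φ ψ χ : G ⧸ H → A) (hφ : SkewHecke.IsInv H α φ) (hψ : SkewHecke.IsInv H α ψ)
    (hχ : SkewHecke.IsInv H α χ) :
    SkewHecke.conv H α s φ ψ = SkewHecke.conv H α t φ ψ ∧
    SkewHecke.IsInv H α (SkewHecke.conv H α s φ ψ) ∧
    SkewHecke.conv H α s (SkewHecke.conv H α s φ ψ) χ =
      SkewHecke.conv H α s φ (SkewHecke.conv H α s ψ χ) :=
  ⟨SkewHecke.conv_congr_section (fun c => (hs c).trans (ht c).symm) φ hψ,
    SkewHecke.isInv_conv hs hφ hψ, SkewHecke.conv_assoc hs φ ψ hχ⟩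
end

section
/- If |H| is a unit in A, then the map φ ↦ (g ↦ (1/|H|)·φ(gH)) is an R-algebra isomorphism from the skew Hecke algebra H_R(G,H,A,α) onto the subalgebra Maps(G,A)^{H×H} = {Φ : G → A | Φ(hgh') = α_h Φ(g) for all h,h' ∈ H} of the skew group algebra Maps(G,A) ≅ A ⋊ G with convolution product (Φ*Ψ)(g) = Σ_{k∈G} Φ(k) α_k Ψ(k⁻¹g). -/
/-!
The scalar `|H|⁻¹` is central and fixed by every `α g`, so the map is additive, `R`-linear and
injective, and turns left `H`-invariance on `G ⧸ H` into the condition `Φ (h g h') = α h (Φ g)`;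
conversely such a `Φ` is constant on left cosets `gH` and descends along the section. For the
product, when `ψ` is `H`-invariant the summand `k ↦ φ(kH) α_k ψ(k⁻¹gH)` of the convolution on `G`
only depends on `kH`, so the sum over `G` counts every coset `|H|` times, which cancels one of the
two factors `|H|⁻¹`.
-/

open scoped BigOperators

/-- Convolution product on the skew group algebra `Maps(G,A) ≅ A ⋊ G`. -/
noncomputable def SkewHecke.convG {R A G : Type*} [CommRing R] [Ring A] [Algebra R A] [Group G]
    [Fintype G] (α : G →* (A ≃ₐ[R] A)) (Φ Ψ : G → A) : G → A :=
  fun g => ∑ k : G, Φ k * α k (Ψ (k⁻¹ * g))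

theorem Units.commute_inv_of_val_eq_natCast {A : Type*} [Semiring A] {u : Aˣ} {n : ℕ}
    (hu : (u : A) = n) (a : A) : Commute (↑u⁻¹ : A) a :=
  (hu ▸ Nat.cast_commute n a : Commute (u : A) a).units_inv_left

theorem map_units_inv_of_map_eq {M F : Type*} [Monoid M] [FunLike F M M] [MonoidHomClass F M M]
    (f : F) {u : Mˣ} (hu : f u = u) : f ↑u⁻¹ = ↑u⁻¹ := by
  have hmap : Units.map (f : M →* M) u = u := Units.ext hu
  calc f ↑u⁻¹ = ↑(Units.map (f : M →* M) u)⁻¹ := rfl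
    _ = ↑u⁻¹ := by rw [hmap]

theorem QuotientGroup.sum_comp_mk {G M : Type*} [Group G] [AddCommMonoid M] [Fintype G]
    (H : Subgroup G) [Fintype H] [Fintype (G ⧸ H)] (F : G ⧸ H → M) :
    ∑ g : G, F g = Fintype.card H • ∑ c, F c := by
  calc ∑ g : G, F g = ∑ p : (G ⧸ H) × H, F p.1 :=
        Fintype.sum_equiv Subgroup.groupEquivQuotientProdSubgroup _ _ fun _ => rfl
    _ = Fintype.card H • ∑ c, F c := by
        simp only [Fintype.sum_prod_type, Finset.sum_const, Finset.card_univ, Finset.smul_sum]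

namespace SkewHecke

variable {R A G : Type*} [CommRing R] [Ring A] [Algebra R A] [Group G] {H : Subgroup G}

theorem IsSection.apply_mk {s : G ⧸ H → G} (hs : IsSection s) {X : Type*} {f : G → X}
    (hf : ∀ k, ∀ h ∈ H, f (k * h) = f k) (g : G) : f (s g) = f g := by
  have hmem : g⁻¹ * s g ∈ H := QuotientGroup.eq.mp (hs g).symm
  rw [← hf g _ hmem, mul_inv_cancel_left]

theorem IsInv.map_mul_apply {α : G →* (A ≃ₐ[R] A)} {ψ : G ⧸ H → A} (hψ : IsInv H α ψ)
    (k g : G) {h : G} (hh : h ∈ H) :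
    α (k * h) (ψ ↑((k * h)⁻¹ * g)) = α k (ψ ↑(k⁻¹ * g)) := by
  rw [mul_inv_rev, mul_assoc, hψ _ (H.inv_mem hh), map_mul, AlgEquiv.mul_apply,
    ← AlgEquiv.mul_apply (α h), ← map_mul, mul_inv_cancel, map_one, AlgEquiv.one_apply]

variable (H) in
def inflate (c : A) (φ : G ⧸ H → A) : G → A := fun g => c * φ g

theorem inflate_injective (u : Aˣ) : Function.Injective (inflate H (↑u⁻¹ : A)) := by
  intro φ ψ hφψ
  ext c
  induction c using QuotientGroup.induction_on with
  | H g => simpa [inflate] using congrFun hφψ g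

variable {α : G →* (A ≃ₐ[R] A)}

theorem IsInv.inflate_biInvariant {φ : G ⧸ H → A} (hφ : IsInv H α φ) {c : A}
    (hc : ∀ g, α g c = c) {h h' : G} (hh : h ∈ H) (hh' : h' ∈ H) (g : G) :
    inflate H c φ (h * g * h') = α h (inflate H c φ g) := by
  simp only [inflate, QuotientGroup.mk_mul_of_mem _ hh', hφ h hh, map_mul, hc]

theorem exists_isInv_inflate_eq {s : G ⧸ H → G} (hs : IsSection s) {u : Aˣ}
    (hαu : ∀ g, α g u = u) {Φ : G → A} (hΦ : ∀ h ∈ H, ∀ h' ∈ H, ∀ g, Φ (h * g * h') = α h (Φ g)) :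
    ∃ φ, IsInv H α φ ∧ inflate H (↑u⁻¹ : A) φ = Φ := by
  have hΦ_right : ∀ k, ∀ h ∈ H, Φ (k * h) = Φ k := fun k h hh => by
    simpa using hΦ 1 H.one_mem h hh k
  refine ⟨fun c => u * Φ (s c), fun h hh g => ?_, funext fun g => ?_⟩
  · simp only [hs.apply_mk hΦ_right, map_mul, hαu]
    rw [← hΦ h hh 1 H.one_mem g, mul_one]
  · simp [inflate, hs.apply_mk hΦ_right]

theorem inflate_conv [Fintype G] [Fintype H] [Fintype (G ⧸ H)] {s : G ⧸ H → G}
    (hs : IsSection s) {u : Aˣ} (hu : (u : A) = Fintype.card H) {φ ψ : G ⧸ H → A}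
    (hψ : IsInv H α ψ) :
    inflate H (↑u⁻¹ : A) (conv H α s φ ψ) =
      convG α (inflate H (↑u⁻¹ : A) φ) (inflate H (↑u⁻¹ : A) ψ) := by
  ext g
  set T : G → A := fun k => φ k * α k (ψ ↑(k⁻¹ * g))
  have hT : ∀ k, ∀ h ∈ H, T (k * h) = T k := fun k h hh => by
    simp only [T, QuotientGroup.mk_mul_of_mem _ hh, hψ.map_mul_apply k g hh]
  have hαu : ∀ k, α k ↑u⁻¹ = ↑u⁻¹ := fun k => map_units_inv_of_map_eq _ (by rw [hu, map_natCast])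
  have hcomm := Units.commute_inv_of_val_eq_natCast hu
  calc (↑u⁻¹ : A) * conv H α s φ ψ g
      = ↑u⁻¹ * ∑ c, T (s c) := by
        congr 1
        refine Finset.sum_congr rfl fun c _ => ?_
        simp only [T, hs c, MulAction.Quotient.smul_mk, smul_eq_mul]
    _ = ↑u⁻¹ * ↑u⁻¹ * ∑ k, T k := by
        rw [Finset.sum_congr rfl fun k _ => (hs.apply_mk hT k).symm,
          QuotientGroup.sum_comp_mk H (fun c => T (s c)), nsmul_eq_mul, ← hu, mul_assoc,
          Units.inv_mul_cancel_left]
    _ = convG α (inflate H (↑u⁻¹ : A) φ) (inflate H (↑u⁻¹ : A) ψ) g := by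
        rw [Finset.mul_sum]
        refine Finset.sum_congr rfl fun k _ => ?_
        simp only [inflate, T, map_mul, hαu]
        rw [mul_assoc, mul_assoc, (hcomm (φ k)).left_comm]

end SkewHecke

/-- If `|H|` is a unit in `A`, then `φ ↦ (g ↦ |H|⁻¹ · φ(gH))` is an `R`-algebra isomorphism
from the skew Hecke algebra onto the subalgebra `Maps(G,A)^{H×H}` of the skew group algebra
`Maps(G,A) ≅ A ⋊ G` with the convolution product. -/
theorem skewHecke_iso_biInvariant_subalgebra {R A G : Type*} [CommRing R] [Ring A]
    [Algebra R A] [Group G] [Fintype G] (H : Subgroup G) [Fintype H] [Fintype (G ⧸ H)]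
    (α : G →* (A ≃ₐ[R] A)) (s : G ⧸ H → G) (hs : SkewHecke.IsSection s)
    (u : Aˣ) (hu : (u : A) = (Fintype.card H : A)) :
    let e : (G ⧸ H → A) → (G → A) := fun φ g => (↑u⁻¹ : A) * φ (QuotientGroup.mk g)
    Set.BijOn e {φ | SkewHecke.IsInv H α φ}
      {Φ : G → A | ∀ h ∈ H, ∀ h' ∈ H, ∀ g : G, Φ (h * g * h') = α h (Φ g)} ∧
    (∀ φ ψ : G ⧸ H → A, e (φ + ψ) = e φ + e ψ) ∧
    (∀ (r : R) (φ : G ⧸ H → A), e (r • φ) = r • e φ) ∧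
    (∀ φ ψ : G ⧸ H → A, SkewHecke.IsInv H α φ → SkewHecke.IsInv H α ψ →
      e (SkewHecke.conv H α s φ ψ) = SkewHecke.convG α (e φ) (e ψ)) := by
  intro e
  have hαu : ∀ g, α g u = u := fun g => by rw [hu, map_natCast]
  have hαu_inv : ∀ g, α g ↑u⁻¹ = ↑u⁻¹ := fun g => map_units_inv_of_map_eq _ (hαu g)
  refine ⟨⟨fun φ hφ h hh h' hh' g => hφ.inflate_biInvariant hαu_inv hh hh' g,
    (SkewHecke.inflate_injective u).injOn,
    fun Φ hΦ => SkewHecke.exists_isInv_inflate_eq hs hαu hΦ⟩,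
    fun φ ψ => ?_, fun r φ => ?_, fun φ ψ _ hψ => SkewHecke.inflate_conv hs hu hψ⟩
  · funext g
    simp [e, mul_add]
  · funext g
    simp [e]
end

section
/- If |H| is a unit in A, then e_H := (1/|H|) Σ_{h∈H} 1_A ⊗ h is an idempotent in the skew group algebra A ⋊ G, and the skew Hecke algebra H_R(G,H,A,α) is isomorphic as an R-algebra to the corner ring e_H (A ⋊ G) e_H. -/
open scoped BigOperators

/-- `δ_{H,a}`: the function with value `a` at the identity coset and `0` elsewhere. -/
noncomputable def SkewHecke.delta {A G : Type*} [Ring A] [Group G] (H : Subgroup G)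
    (a : A) : G ⧸ H → A := by
  classical exact fun x => if x = QuotientGroup.mk (1 : G) then a else 0

/-- `e_H = (1/|H|) Σ_{h ∈ H} 1_A ⊗ h`, as an element of `Maps(G,A) ≅ A ⋊ G`. -/
noncomputable def SkewHecke.eH {A G : Type*} [Ring A] [Group G] (H : Subgroup G)
    (v : A) : G → A := by
  classical exact fun g => if g ∈ H then v else 0

/-!
Write `v = |H|⁻¹`; it is central in `A` and fixed by every `α g`. Right convolution with `e_H`
averages over right `H`-translates, and left convolution with `e_H` averages the twisted left
`H`-action, so the corner `e_H (A ⋊ G) e_H` consists exactly of the maps `Φ : G → A` with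
`Φ (g h) = Φ g` and `Φ (h g) = α_h (Φ g)` for `h ∈ H`. These are the maps `g ↦ v φ(gH)` with
`φ` in the skew Hecke algebra, and splitting a sum over `G` along a section of `G → G ⧸ H` turns
the convolution of `A ⋊ G` into that of the skew Hecke algebra.
-/

namespace Units

variable {A : Type*} [Ring A] {u : Aˣ} {n : ℕ}

theorem inv_commute_of_val_eq_natCast (hu : (u : A) = n) (a : A) : Commute (↑u⁻¹ : A) a :=
  Commute.units_inv_left (hu ▸ Nat.cast_commute n a)

theorem map_inv_of_val_eq_natCast {F : Type*} [FunLike F A A] [RingHomClass F A A]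
    (hu : (u : A) = n) (f : F) : f ↑u⁻¹ = ↑u⁻¹ :=
  Units.eq_inv_of_mul_eq_one_left <| calc
    ↑u * f ↑u⁻¹ = f ↑u * f ↑u⁻¹ := by rw [hu, map_natCast]
    _ = 1 := by rw [← map_mul, Units.mul_inv, map_one]

theorem nsmul_inv_mul_of_val_eq_natCast (hu : (u : A) = n) (a : A) : n • (↑u⁻¹ * a) = a := by
  rw [nsmul_eq_mul, ← mul_assoc, ← hu, Units.mul_inv, one_mul]

end Units

namespace SkewHecke

variable {G : Type*} [Group G] {H : Subgroup G}

theorem IsSection.mk_mul {s : G ⧸ H → G} (hs : IsSection s) (c : G ⧸ H) (h : H) :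
    (QuotientGroup.mk (s c * h) : G ⧸ H) = c := by
  rw [QuotientGroup.mk_mul_of_mem _ h.2, hs]

def IsSection.prodEquiv {s : G ⧸ H → G} (hs : IsSection s) : (G ⧸ H) × H ≃ G where
  toFun p := s p.1 * p.2
  invFun k := (QuotientGroup.mk k,
    ⟨(s (QuotientGroup.mk k))⁻¹ * k, QuotientGroup.eq.mp (hs (QuotientGroup.mk k))⟩)
  left_inv p := by ext <;> simp [hs.mk_mul]
  right_inv k := by simp

theorem IsSection.sum_eq [Fintype G] [Fintype H] [Fintype (G ⧸ H)] {M : Type*} [AddCommMonoid M]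
    {s : G ⧸ H → G} (hs : IsSection s) (f : G → M) :
    ∑ k : G, f k = ∑ c : G ⧸ H, ∑ h : H, f (s c * h) := by
  rw [← hs.prodEquiv.sum_comp, Fintype.sum_prod_type]
  rfl

theorem sum_ite_mem_eq_sum_subgroup [Fintype G] [Fintype H] {M : Type*} [AddCommMonoid M]
    [DecidablePred (· ∈ H)] (f : G → M) :
    ∑ k : G, (if k ∈ H then f k else 0) = ∑ h : H, f h := by
  rw [← Finset.sum_filter]
  exact Finset.sum_subtype _ (by simp) f

def IsRightInvariant {A : Type*} (H : Subgroup G) (Φ : G → A) : Prop :=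
  ∀ g : G, ∀ h ∈ H, Φ (g * h) = Φ g

theorem IsRightInvariant.apply_section {A : Type*} {Φ : G → A} (hΦ : IsRightInvariant H Φ)
    {s : G ⧸ H → G} (hs : IsSection s) (g : G) : Φ (s (QuotientGroup.mk g)) = Φ g := by
  have hmem : g⁻¹ * s (QuotientGroup.mk g) ∈ H := QuotientGroup.eq.mp (hs _).symm
  simpa using hΦ g _ hmem

variable {R A : Type*} [CommRing R] [Ring A] [Algebra R A]

def IsLeftEquivariant (H : Subgroup G) (α : G →* (A ≃ₐ[R] A)) (Φ : G → A) : Prop :=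
  ∀ h ∈ H, ∀ g : G, Φ (h * g) = α h (Φ g)

theorem IsLeftEquivariant.apply_inv_mul {α : G →* (A ≃ₐ[R] A)} {Φ : G → A}
    (hΦ : IsLeftEquivariant H α Φ) {h : G} (hh : h ∈ H) (g : G) :
    α h (Φ (h⁻¹ * g)) = Φ g := by
  rw [← hΦ h hh, mul_inv_cancel_left]

theorem eH_apply_of_mem {v : A} {g : G} (hg : g ∈ H) : eH H v g = v := if_pos hg

theorem eH_apply_of_notMem {v : A} {g : G} (hg : g ∉ H) : eH H v g = 0 := if_neg hg

theorem isRightInvariant_eH (v : A) : IsRightInvariant H (eH H v) := by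
  intro g h hh
  by_cases hg : g ∈ H
  · rw [eH_apply_of_mem (H.mul_mem hg hh), eH_apply_of_mem hg]
  · rw [eH_apply_of_notMem (fun hgh => hg (by simpa using H.mul_mem hgh (H.inv_mem hh))),
      eH_apply_of_notMem hg]

section Convolution

variable [Fintype G] [Fintype H] {α : G →* (A ≃ₐ[R] A)} {v : A}

theorem convG_eH_apply (hv : ∀ k, α k v = v) (Φ : G → A) (g : G) :
    convG α Φ (eH H v) g = (∑ h : H, Φ (g * h)) * v := by
  classical
  have hterm : ∀ m : G, Φ (g * m) * α (g * m) (eH H v ((g * m)⁻¹ * g))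
      = if m ∈ H then Φ (g * m) * v else 0 := by
    intro m
    rw [mul_inv_rev, inv_mul_cancel_right]
    split_ifs with hm
    · rw [eH_apply_of_mem (H.inv_mem hm), hv]
    · rw [eH_apply_of_notMem (by simpa using hm), map_zero, mul_zero]
  rw [convG, ← Equiv.sum_comp (Equiv.mulLeft g)]
  simp only [Equiv.coe_mulLeft, hterm, sum_ite_mem_eq_sum_subgroup, Finset.sum_mul]

theorem eH_convG_apply (Ψ : G → A) (g : G) :
    convG α (eH H v) Ψ g = ∑ h : H, v * α h (Ψ ((h : G)⁻¹ * g)) := by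
  classical
  have hterm : ∀ k : G, eH H v k * α k (Ψ (k⁻¹ * g))
      = if k ∈ H then v * α k (Ψ (k⁻¹ * g)) else 0 := by
    intro k
    split_ifs with hk
    · rw [eH_apply_of_mem hk]
    · rw [eH_apply_of_notMem hk, zero_mul]
  rw [convG]
  simp only [hterm, sum_ite_mem_eq_sum_subgroup]

theorem isRightInvariant_convG_eH (hv : ∀ k, α k v = v) (Φ : G → A) :
    IsRightInvariant H (convG α Φ (eH H v)) := by
  intro g h hh
  rw [convG_eH_apply hv, convG_eH_apply hv]
  congr 1
  exact Fintype.sum_equiv (Equiv.mulLeft ⟨h, hh⟩) _ _ fun h' => by simp [mul_assoc]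

theorem IsRightInvariant.eH_convG {Ψ : G → A} (hΨ : IsRightInvariant H Ψ) :
    IsRightInvariant H (convG α (eH H v) Ψ) := by
  intro g h hh
  simp only [eH_convG_apply, ← mul_assoc, hΨ _ h hh]

theorem isLeftEquivariant_eH_convG (hv : ∀ k, α k v = v) (Ψ : G → A) :
    IsLeftEquivariant H α (convG α (eH H v) Ψ) := by
  intro h hh g
  rw [eH_convG_apply, eH_convG_apply, map_sum]
  refine (Fintype.sum_equiv (Equiv.mulLeft ⟨h, hh⟩) _ _ fun h' => ?_).symm
  simp only [Equiv.coe_mulLeft, Subgroup.coe_mul, map_mul, hv, mul_inv_rev, AlgEquiv.mul_apply,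
    mul_assoc, inv_mul_cancel_left]

variable {u : Aˣ} (hu : (u : A) = Fintype.card H)
include hu

theorem IsRightInvariant.convG_eH_eq_self {Φ : G → A} (hΦ : IsRightInvariant H Φ) :
    convG α Φ (eH H ↑u⁻¹) = Φ := by
  funext g
  rw [convG_eH_apply (fun k => Units.map_inv_of_val_eq_natCast hu (α k)),
    Finset.sum_congr rfl fun (h : H) _ => hΦ g h h.2, Finset.sum_const, Finset.card_univ,
    smul_mul_assoc, ← (Units.inv_commute_of_val_eq_natCast hu _).eq, Units.nsmul_inv_mul_of_val_eq_natCast hu]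

theorem IsLeftEquivariant.eH_convG_eq_self {Φ : G → A} (hΦ : IsLeftEquivariant H α Φ) :
    convG α (eH H ↑u⁻¹) Φ = Φ := by
  funext g
  rw [eH_convG_apply, Finset.sum_congr rfl fun (h : H) _ => congrArg _ (hΦ.apply_inv_mul h.2 g),
    Finset.sum_const, Finset.card_univ, Units.nsmul_inv_mul_of_val_eq_natCast hu]

theorem eH_convG_convG_eH_eq_self_iff (Φ : G → A) :
    convG α (eH H ↑u⁻¹) (convG α Φ (eH H ↑u⁻¹)) = Φ ↔
      IsRightInvariant H Φ ∧ IsLeftEquivariant H α Φ := by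
  have hv : ∀ k, α k ↑u⁻¹ = ↑u⁻¹ := fun k => Units.map_inv_of_val_eq_natCast hu (α k)
  refine ⟨fun hΦ => hΦ ▸ ⟨(isRightInvariant_convG_eH hv Φ).eH_convG,
    isLeftEquivariant_eH_convG hv _⟩, fun ⟨hR, hL⟩ => ?_⟩
  rw [hR.convG_eH_eq_self hu, hL.eH_convG_eq_self hu]

end Convolution

def toCorner (H : Subgroup G) (v : A) (φ : G ⧸ H → A) : G → A :=
  fun g => v * φ (QuotientGroup.mk g)

theorem isRightInvariant_toCorner (v : A) (φ : G ⧸ H → A) :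
    IsRightInvariant H (toCorner H v φ) :=
  fun g _ hh => congrArg (v * φ ·) (QuotientGroup.mk_mul_of_mem g hh)

theorem IsInv.isLeftEquivariant_comp_mk {α : G →* (A ≃ₐ[R] A)} {φ : G ⧸ H → A}
    (hφ : IsInv H α φ) : IsLeftEquivariant H α (φ ∘ QuotientGroup.mk) :=
  hφ

theorem IsInv.isLeftEquivariant_toCorner {α : G →* (A ≃ₐ[R] A)} {v : A}
    (hv : ∀ k, α k v = v) {φ : G ⧸ H → A} (hφ : IsInv H α φ) :
    IsLeftEquivariant H α (toCorner H v φ) :=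
  fun h hh g => by rw [toCorner, toCorner, hφ h hh g, map_mul, hv]

theorem toCorner_injective (u : Aˣ) : Function.Injective (toCorner H (↑u⁻¹ : A)) :=
  fun φ ψ hφψ => funext fun c => by
    obtain ⟨g, rfl⟩ := QuotientGroup.mk_surjective c
    exact (Units.mul_right_inj u⁻¹).mp (congrFun hφψ g)

theorem exists_isInv_toCorner_eq {α : G →* (A ≃ₐ[R] A)} {s : G ⧸ H → G} (hs : IsSection s)
    {u : Aˣ} {n : ℕ} (hu : (u : A) = n) {Φ : G → A} (hR : IsRightInvariant H Φ)
    (hL : IsLeftEquivariant H α Φ) : ∃ φ, IsInv H α φ ∧ toCorner H ↑u⁻¹ φ = Φ := by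
  refine ⟨fun c => ↑u * Φ (s c), fun h hh g => ?_, funext fun g => ?_⟩
  · simp only [hR.apply_section hs, hL h hh g, map_mul, hu, map_natCast]
  · rw [toCorner, hR.apply_section hs, Units.inv_mul_cancel_left]

theorem toCorner_delta_one (v : A) : toCorner H v (delta H 1) = eH H v := by
  funext g
  have hmk : (QuotientGroup.mk g : G ⧸ H) = QuotientGroup.mk 1 ↔ g ∈ H := by
    simp [QuotientGroup.eq]
  by_cases hg : g ∈ H
  · rw [toCorner, delta, if_pos (hmk.2 hg), mul_one, eH_apply_of_mem hg]
  · rw [toCorner, delta, if_neg (mt hmk.1 hg), mul_zero, eH_apply_of_notMem hg]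

theorem toCorner_conv [Fintype G] [Fintype H] [Fintype (G ⧸ H)] {α : G →* (A ≃ₐ[R] A)}
    {s : G ⧸ H → G} (hs : IsSection s) {u : Aˣ} (hu : (u : A) = Fintype.card H)
    (φ : G ⧸ H → A) {ψ : G ⧸ H → A} (hψ : IsInv H α ψ) :
    toCorner H ↑u⁻¹ (conv H α s φ ψ) = convG α (toCorner H ↑u⁻¹ φ) (toCorner H ↑u⁻¹ ψ) := by
  funext g
  have hv : ∀ k, α k ↑u⁻¹ = ↑u⁻¹ := fun k => Units.map_inv_of_val_eq_natCast hu (α k)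
  have hterm : ∀ (c : G ⧸ H) (h : H),
      toCorner H ↑u⁻¹ φ (s c * h) * α (s c * h) (toCorner H ↑u⁻¹ ψ ((s c * h)⁻¹ * g))
        = ↑u⁻¹ * (↑u⁻¹ * (φ c * α (s c) (ψ ((s c)⁻¹ • QuotientGroup.mk g)))) := by
    intro c h
    have hψh := hψ.isLeftEquivariant_comp_mk.apply_inv_mul h.2 ((s c)⁻¹ * g)
    have hψ' : α (s c * h) (ψ (QuotientGroup.mk ((s c * h)⁻¹ * g)))
        = α (s c) (ψ ((s c)⁻¹ • QuotientGroup.mk g)) := by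
      rw [map_mul α, AlgEquiv.mul_apply, mul_inv_rev, mul_assoc]
      exact congrArg (α (s c)) hψh
    rw [toCorner, toCorner, hs.mk_mul, map_mul, hv, hψ', mul_assoc,
      ← (Units.inv_commute_of_val_eq_natCast hu (φ c)).left_comm]
  rw [convG, hs.sum_eq]
  simp only [hterm, Finset.sum_const, Finset.card_univ, Units.nsmul_inv_mul_of_val_eq_natCast hu]
  rw [toCorner, conv, Finset.mul_sum]

end SkewHecke

open SkewHecke in
/-- If `|H|` is a unit in `A`, then `e_H = (1/|H|)Σ_{h∈H} 1_A ⊗ h` is an idempotent in the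
skew group algebra `A ⋊ G ≅ Maps(G,A)`, and the skew Hecke algebra is isomorphic as an
`R`-algebra to the corner ring `e_H (A ⋊ G) e_H`. -/
theorem skewHecke_iso_corner_ring {R A G : Type*} [CommRing R] [Ring A]
    [Algebra R A] [Group G] [Fintype G] (H : Subgroup G) [Fintype H] [Fintype (G ⧸ H)]
    (α : G →* (A ≃ₐ[R] A)) (s : G ⧸ H → G) (hs : SkewHecke.IsSection s)
    (u : Aˣ) (hu : (u : A) = (Fintype.card H : A)) :
    let eH : G → A := SkewHecke.eH H (↑u⁻¹ : A)
    let e : (G ⧸ H → A) → (G → A) := fun φ g => (↑u⁻¹ : A) * φ (QuotientGroup.mk g)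
    -- `e_H` is an idempotent in `A ⋊ G`
    SkewHecke.convG α eH eH = eH ∧
    -- `e` is a bijection from the skew Hecke algebra onto the corner ring `e_H (A ⋊ G) e_H`
    Set.BijOn e {φ | SkewHecke.IsInv H α φ}
      {Φ : G → A | SkewHecke.convG α eH (SkewHecke.convG α Φ eH) = Φ} ∧
    -- `e` is `R`-linear
    (∀ φ ψ : G ⧸ H → A, e (φ + ψ) = e φ + e ψ) ∧
    (∀ (r : R) (φ : G ⧸ H → A), e (r • φ) = r • e φ) ∧
    -- `e` is multiplicative
    (∀ φ ψ : G ⧸ H → A, SkewHecke.IsInv H α φ → SkewHecke.IsInv H α ψ →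
      e (SkewHecke.conv H α s φ ψ) = SkewHecke.convG α (e φ) (e ψ)) ∧
    -- `e` maps the identity of the skew Hecke algebra to `e_H`, the identity of the corner
    e (SkewHecke.delta H (1 : A)) = eH := by
  intro eH e
  refine ⟨(isRightInvariant_eH _).convG_eH_eq_self hu,
    ⟨fun φ hφ => ?_, (toCorner_injective u).injOn, fun Φ hΦ => ?_⟩,
    fun φ ψ => funext fun g => mul_add _ _ _, fun r φ => funext fun g => mul_smul_comm r _ _,
    fun φ _ _ hψ => toCorner_conv hs hu φ hψ, toCorner_delta_one _⟩
  · have hv : ∀ k, α k ↑u⁻¹ = ↑u⁻¹ := fun k => Units.map_inv_of_val_eq_natCast hu (α k)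
    exact (eH_convG_convG_eH_eq_self_iff hu _).2
      ⟨isRightInvariant_toCorner _ φ, IsInv.isLeftEquivariant_toCorner hv hφ⟩
  · obtain ⟨hR, hL⟩ := (eH_convG_convG_eH_eq_self_iff hu Φ).1 hΦ
    exact exists_isInv_toCorner_eq hs hu hR hL
end

section
/- Evaluation at a set of double coset representatives g_1,…,g_n of H\G/H gives an isomorphism of A^H-bimodules from the skew Hecke algebra H_R(G,H,A,α) onto the direct sum ⊕_{i=1}^n A^{H ∩ g_i H g_i⁻¹}, where A^H acts on H_R(G,H,A,α) via a·φ·a' = δ_{H,a} * φ * δ_{H,a'}, and on the summand indexed by g by a·b·a' = a b α_g(a'). -/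
/-!
An `H`-invariant `φ : G ⧸ H → A` satisfies `φ (h • x) = α h (φ x)` for `h ∈ H`, so it is
determined by its values at the cosets `g H` of the representatives, and the value at `g H` is
fixed by the stabiliser `H ∩ g H g⁻¹` of `g H` in `H`. Conversely, a value `b` fixed by that
stabiliser extends consistently along the orbit `H • g H` by `h • g H ↦ α h b`. On invariant
functions, convolution on the left with `δ_{H,a}` is pointwise left multiplication by `a`, and
convolution on the right with `δ_{H,a'}` multiplies the value at `x` by `α (s x) a'`, which is
`α g a'` for any `g ∈ x` once `a'` is `H`-fixed.
-/

open scoped BigOperators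

namespace SkewHecke

open QuotientGroup

section Cosets

variable {G : Type*} [Group G] {H : Subgroup G}

theorem mem_inf_map_conj_iff {g h : G} :
    h ∈ H ⊓ H.map (MulAut.conj g).toMonoidHom ↔ h ∈ H ∧ h • (g : G ⧸ H) = g := by
  rw [Subgroup.mem_inf, Subgroup.mem_map, MulAction.Quotient.smul_mk, smul_eq_mul,
    QuotientGroup.eq]
  refine and_congr_right fun _ => ⟨?_, fun hk => ⟨_, H.inv_mem hk, ?_⟩⟩
  · rintro ⟨k, hk, rfl⟩
    simpa using H.inv_mem hk
  · simp [MulAut.conj_apply, mul_assoc]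

variable (H) in
def doubleCosetOf : G ⧸ H → DoubleCoset.Quotient (H : Set G) (H : Set G) :=
  Quotient.lift (DoubleCoset.mk H H) fun a b hab =>
    (DoubleCoset.eq H H a b).2 ⟨1, H.one_mem, a⁻¹ * b, leftRel_apply.1 hab, by group⟩

@[simp]
theorem doubleCosetOf_mk (g : G) : doubleCosetOf H g = DoubleCoset.mk H H g := rfl

theorem doubleCosetOf_smul {h : G} (hh : h ∈ H) (x : G ⧸ H) :
    doubleCosetOf H (h • x) = doubleCosetOf H x := by
  induction x using QuotientGroup.induction_on with | H g => ?_
  exact ((DoubleCoset.eq H H g (h * g)).2 ⟨h, hh, 1, H.one_mem, by group⟩).symm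

theorem exists_smul_mk_rep {r : DoubleCoset.Quotient (H : Set G) (H : Set G) → G}
    (hr : ∀ q, DoubleCoset.mk H H (r q) = q) (x : G ⧸ H) :
    ∃ h ∈ H, x = h • (r (doubleCosetOf H x) : G ⧸ H) := by
  induction x using QuotientGroup.induction_on with | H g => ?_
  obtain ⟨h, hh, k, hk, hg⟩ := (DoubleCoset.eq H H _ g).1 (hr (DoubleCoset.mk H H g))
  refine ⟨h, hh, ?_⟩
  rw [doubleCosetOf_mk, MulAction.Quotient.smul_mk, smul_eq_mul,
    ← mk_mul_of_mem (h * r (DoubleCoset.mk H H g)) hk, ← hg]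

theorem IsSection.inv_smul_eq_mk_one_iff {s : G ⧸ H → G} (hs : IsSection s) (c x : G ⧸ H) :
    (s c)⁻¹ • x = ((1 : G) : G ⧸ H) ↔ c = x := by
  rw [inv_smul_eq_iff, MulAction.Quotient.smul_mk, smul_eq_mul, mul_one, hs, eq_comm]

theorem IsSection.mem_mk_one {s : G ⧸ H → G} (hs : IsSection s) :
    s ((1 : G) : G ⧸ H) ∈ H := by
  simpa using QuotientGroup.eq.1 (hs ((1 : G) : G ⧸ H)).symm

end Cosets

variable {R A G : Type*} [CommRing R] [Ring A] [Algebra R A] [Group G]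
  {H : Subgroup G} {α : G →* (A ≃ₐ[R] A)}

theorem map_mul_apply (g g' : G) (a : A) : α (g * g') a = α g (α g' a) := by
  rw [map_mul, AlgEquiv.mul_apply]

theorem IsInv.apply_smul {φ : G ⧸ H → A} (hφ : IsInv H α φ) {h : G} (hh : h ∈ H)
    (x : G ⧸ H) : φ (h • x) = α h (φ x) := by
  induction x using QuotientGroup.induction_on with | H g => exact hφ h hh g

theorem IsInv.apply_mk_fixed {φ : G ⧸ H → A} (hφ : IsInv H α φ) (g : G) :
    ∀ h ∈ H ⊓ H.map (MulAut.conj g).toMonoidHom, α h (φ g) = φ g := by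
  intro h hmem
  obtain ⟨hh, hfix⟩ := mem_inf_map_conj_iff.1 hmem
  rw [← hφ.apply_smul hh, hfix]

theorem apply_eq_apply_of_smul_mk_eq {g : G} {b : A}
    (hb : ∀ h ∈ H ⊓ H.map (MulAut.conj g).toMonoidHom, α h b = b) {h₁ h₂ : G}
    (hh₁ : h₁ ∈ H) (hh₂ : h₂ ∈ H) (heq : h₁ • (g : G ⧸ H) = h₂ • (g : G ⧸ H)) :
    α h₁ b = α h₂ b := by
  have hmem : h₁⁻¹ * h₂ ∈ H ⊓ H.map (MulAut.conj g).toMonoidHom :=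
    mem_inf_map_conj_iff.2
      ⟨H.mul_mem (H.inv_mem hh₁) hh₂, by rw [mul_smul, ← heq, inv_smul_smul]⟩
  rw [← mul_inv_cancel_left h₁ h₂, map_mul_apply, hb _ hmem]

theorem IsSection.apply_mk_of_fixed {s : G ⧸ H → G} (hs : IsSection s) {a : A}
    (ha : ∀ h ∈ H, α h a = a) (g : G) : α (s g) a = α g a := by
  have hk : g⁻¹ * s g ∈ H := QuotientGroup.eq.1 (hs g).symm
  rw [← mul_inv_cancel_left g (s g), map_mul_apply, ha _ hk]

section DoubleCosetReps

variable {r : DoubleCoset.Quotient (H : Set G) (H : Set G) → G}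
  (hr : ∀ q, DoubleCoset.mk H H (r q) = q)
include hr

variable (α) in
noncomputable def ofReps (f : DoubleCoset.Quotient (H : Set G) (H : Set G) → A) (x : G ⧸ H) :
    A :=
  α (exists_smul_mk_rep hr x).choose (f (doubleCosetOf H x))

variable {f : DoubleCoset.Quotient (H : Set G) (H : Set G) → A}
  (hf : ∀ q, ∀ h ∈ H ⊓ H.map (MulAut.conj (r q)).toMonoidHom, α h (f q) = f q)
include hf

theorem ofReps_smul_mk {h : G} (hh : h ∈ H)
    (q : DoubleCoset.Quotient (H : Set G) (H : Set G)) :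
    ofReps α hr f (h • (r q : G ⧸ H)) = α h (f q) := by
  set x := h • (r q : G ⧸ H)
  have hq : doubleCosetOf H x = q := by rw [doubleCosetOf_smul hh, doubleCosetOf_mk, hr]
  obtain ⟨hh', hx⟩ := (exists_smul_mk_rep hr x).choose_spec
  rw [ofReps, apply_eq_apply_of_smul_mk_eq (hf _) hh' hh (by rw [← hx, hq]), hq]

theorem isInv_ofReps : IsInv H α (ofReps α hr f) := by
  intro h hh g
  obtain ⟨h₀, hh₀, hg⟩ := exists_smul_mk_rep hr (g : G ⧸ H)
  have hhg : ((h * g : G) : G ⧸ H) = (h * h₀) • (r (doubleCosetOf H g) : G ⧸ H) := by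
    rw [mul_smul, ← hg, MulAction.Quotient.smul_mk, smul_eq_mul]
  rw [hhg, ofReps_smul_mk hr hf (H.mul_mem hh hh₀), map_mul_apply]
  conv_rhs => rw [hg, ofReps_smul_mk hr hf hh₀]

theorem ofReps_mk_rep (q : DoubleCoset.Quotient (H : Set G) (H : Set G)) :
    ofReps α hr f (r q) = f q := by
  simpa using ofReps_smul_mk hr hf H.one_mem q

omit hf

theorem IsInv.ext_of_reps {φ ψ : G ⧸ H → A} (hφ : IsInv H α φ) (hψ : IsInv H α ψ)
    (h : ∀ q, φ (r q) = ψ (r q)) : φ = ψ := by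
  funext x
  obtain ⟨h₀, hh₀, hx⟩ := exists_smul_mk_rep hr x
  rw [hx, hφ.apply_smul hh₀, hψ.apply_smul hh₀, h]

end DoubleCosetReps

section Convolution

theorem delta_apply_mk_one (a : A) : delta H a ((1 : G) : G ⧸ H) = a := by
  simp [delta]

theorem delta_apply_of_ne {a : A} {x : G ⧸ H} (hx : x ≠ ((1 : G) : G ⧸ H)) :
    delta H a x = 0 := by
  simp [delta, hx]

variable [Fintype (G ⧸ H)] {s : G ⧸ H → G} (hs : IsSection s)
include hs

theorem conv_delta_right (φ : G ⧸ H → A) (a' : A) (x : G ⧸ H) :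
    conv H α s φ (delta H a') x = φ x * α (s x) a' := by
  simp only [conv]
  rw [Finset.sum_eq_single x]
  · rw [(hs.inv_smul_eq_mk_one_iff x x).2 rfl, delta_apply_mk_one]
  · intro c _ hc
    rw [delta_apply_of_ne (mt (hs.inv_smul_eq_mk_one_iff c x).1 hc), map_zero, mul_zero]
  · simp

theorem conv_delta_left {ψ : G ⧸ H → A} (hψ : IsInv H α ψ) (a : A) (x : G ⧸ H) :
    conv H α s (delta H a) ψ x = a * ψ x := by
  simp only [conv]
  rw [Finset.sum_eq_single ((1 : G) : G ⧸ H)]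
  · rw [delta_apply_mk_one, hψ.apply_smul (H.inv_mem hs.mem_mk_one), ← map_mul_apply,
      mul_inv_cancel, map_one, AlgEquiv.one_apply]
  · intro c _ hc
    rw [delta_apply_of_ne hc, zero_mul]
  · simp

theorem isInv_conv_delta_right {φ : G ⧸ H → A} (hφ : IsInv H α φ) {a' : A}
    (ha' : ∀ h ∈ H, α h a' = a') : IsInv H α (conv H α s φ (delta H a')) := by
  intro h hh g
  rw [conv_delta_right hs, conv_delta_right hs, hs.apply_mk_of_fixed ha',
    hs.apply_mk_of_fixed ha', map_mul_apply, map_mul (α h), hφ h hh g]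

end Convolution

end SkewHecke

/-- Evaluation at a set of double coset representatives is an isomorphism of
`A^H`-bimodules from the skew Hecke algebra onto `⊕_{HgH} A^{H ∩ gHg⁻¹}`, where `A^H` acts
on the skew Hecke algebra by `a·φ·a' = δ_{H,a} * φ * δ_{H,a'}` and on the summand indexed
by `g` by `a·b·a' = a b α_g(a')`. -/
theorem skewHecke_double_coset_decomposition {R A G : Type*} [CommRing R] [Ring A]
    [Algebra R A] [Group G] (H : Subgroup G) [Fintype (G ⧸ H)]
    (α : G →* (A ≃ₐ[R] A)) (s : G ⧸ H → G) (hs : SkewHecke.IsSection s)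
    -- a set of representatives of the double cosets of `H` in `G`
    (r : DoubleCoset.Quotient (H : Set G) (H : Set G) → G)
    (hr : ∀ q, DoubleCoset.mk H H (r q) = q) :
    let E : (G ⧸ H → A) → (DoubleCoset.Quotient (H : Set G) (H : Set G) → A) :=
      fun φ q => φ (QuotientGroup.mk (r q))
    -- `E` is a bijection onto the product of the fixed-point modules `A^{H ∩ gHg⁻¹}`
    Set.BijOn E {φ | SkewHecke.IsInv H α φ}
      {f | ∀ q, ∀ h ∈ H ⊓ Subgroup.map (MulAut.conj (r q)).toMonoidHom H,
        α h (f q) = f q} ∧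
    -- `E` is `R`-linear
    (∀ φ ψ : G ⧸ H → A, E (φ + ψ) = E φ + E ψ) ∧
    (∀ (c : R) (φ : G ⧸ H → A), E (c • φ) = c • E φ) ∧
    -- `E` intertwines the `A^H`-bimodule structures
    (∀ a a' : A, (∀ h ∈ H, α h a = a) → (∀ h ∈ H, α h a' = a') →
      ∀ φ : G ⧸ H → A, SkewHecke.IsInv H α φ →
        E (SkewHecke.conv H α s (SkewHecke.delta H a)
            (SkewHecke.conv H α s φ (SkewHecke.delta H a'))) =
          fun q => a * E φ q * α (r q) a') := by
  open SkewHecke in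
  intro E
  refine ⟨⟨fun φ hφ q => hφ.apply_mk_fixed (r q),
    fun φ hφ ψ hψ hE => hφ.ext_of_reps hr hψ (congrFun hE),
    fun f hf => ⟨ofReps α hr f, isInv_ofReps hr hf, funext (ofReps_mk_rep hr hf)⟩⟩,
    fun _ _ => rfl, fun _ _ => rfl, fun a a' _ ha' φ hφ => funext fun q => ?_⟩
  dsimp only [E]
  rw [conv_delta_left hs (isInv_conv_delta_right hs hφ ha'), conv_delta_right hs,
    hs.apply_mk_of_fixed ha', mul_assoc]
end

section
/- The map φ ↦ i_A ∘ φ, where i_A : R → A is the structure map, is an R-algebra homomorphism from the Hecke algebra H_R(G,H) into the skew Hecke algebra H_R(G,H,A,α), and it is injective whenever A is faithful as an R-module. -/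
open scoped BigOperators

namespace SkewHecke

variable {R A G : Type*} [CommRing R] [Ring A] [Algebra R A] [Group G] {H : Subgroup G}

theorem IsInv.algebraMap_comp {φ : G ⧸ H → R} (hφ : IsInv H (1 : G →* (R ≃ₐ[R] R)) φ)
    (α : G →* (A ≃ₐ[R] A)) : IsInv H α (algebraMap R A ∘ φ) := by
  intro h hh g
  simp only [Function.comp_apply, hφ h hh g, MonoidHom.one_apply, AlgEquiv.one_apply,
    AlgEquiv.commutes]

-- `α` fixes the image of `algebraMap`, so the twist disappears on scalar-valued functions.
theorem algebraMap_comp_conv [Fintype (G ⧸ H)] (α : G →* (A ≃ₐ[R] A)) (s : G ⧸ H → G)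
    (φ ψ : G ⧸ H → R) :
    algebraMap R A ∘ conv H (1 : G →* (R ≃ₐ[R] R)) s φ ψ =
      conv H α s (algebraMap R A ∘ φ) (algebraMap R A ∘ ψ) := by
  funext x
  simp only [conv, Function.comp_apply, map_sum, map_mul, MonoidHom.one_apply,
    AlgEquiv.one_apply, AlgEquiv.commutes]

theorem ringHom_comp_delta {B : Type*} [Ring B] (f : A →+* B) (a : A) :
    f ∘ delta H a = delta H (f a) := by
  funext x
  simp only [delta, Function.comp_apply]
  split_ifs <;> simp

end SkewHecke

theorem faithfulSMul_of_smul_eq_zero {R A : Type*} [Ring R] [AddCommGroup A] [Module R A]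
    (h : ∀ r : R, (∀ a : A, r • a = 0) → r = 0) : FaithfulSMul R A :=
  ⟨fun {r₁ r₂} hr => sub_eq_zero.mp <| h _ fun a => by rw [sub_smul, hr, sub_self]⟩

theorem hecke_to_skewHecke_embedding_general {R A G : Type*} [CommRing R] [Ring A]
    [Algebra R A] [Group G] (H : Subgroup G) [Fintype (G ⧸ H)]
    (α : G →* (A ≃ₐ[R] A)) (s : G ⧸ H → G) :
    let J : (G ⧸ H → R) → (G ⧸ H → A) := fun φ x => algebraMap R A (φ x)
    -- `J` maps the Hecke algebra into the skew Hecke algebra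
    (∀ φ : G ⧸ H → R, SkewHecke.IsInv H (1 : G →* (R ≃ₐ[R] R)) φ →
      SkewHecke.IsInv H α (J φ)) ∧
    -- `J` is `R`-linear
    (∀ φ ψ : G ⧸ H → R, J (φ + ψ) = J φ + J ψ) ∧
    (∀ (r : R) (φ : G ⧸ H → R), J (r • φ) = r • J φ) ∧
    -- `J` is multiplicative and unital
    (∀ φ ψ : G ⧸ H → R, SkewHecke.IsInv H (1 : G →* (R ≃ₐ[R] R)) φ →
      SkewHecke.IsInv H (1 : G →* (R ≃ₐ[R] R)) ψ →
      J (SkewHecke.conv H (1 : G →* (R ≃ₐ[R] R)) s φ ψ) =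
        SkewHecke.conv H α s (J φ) (J ψ)) ∧
    J (SkewHecke.delta H (1 : R)) = SkewHecke.delta H (1 : A) ∧
    -- `J` is injective whenever `A` is a faithful `R`-module
    ((∀ r : R, (∀ a : A, r • a = 0) → r = 0) → Function.Injective J) := by
  intro J
  refine ⟨fun φ hφ => hφ.algebraMap_comp α,
    fun φ ψ => funext fun x => map_add _ _ _,
    fun r φ => funext fun x => map_smul (Algebra.linearMap R A) r (φ x),
    fun φ ψ _ _ => SkewHecke.algebraMap_comp_conv α s φ ψ,
    (SkewHecke.ringHom_comp_delta (algebraMap R A) 1).trans (by rw [map_one]),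
    fun hA => ?_⟩
  have := faithfulSMul_of_smul_eq_zero hA
  exact (FaithfulSMul.algebraMap_injective R A).comp_left

/-- The map `φ ↦ i_A ∘ φ` is an `R`-algebra homomorphism from the Hecke algebra
`H_R(G,H) = Maps(G/H,R)^H` (with the untwisted convolution product, i.e. the trivial action
`1 : G →* (R ≃ₐ[R] R)`) into the skew Hecke algebra `H_R(G,H,A,α)`, injective whenever `A`
is faithful as an `R`-module. -/
theorem hecke_to_skewHecke_embedding {R A G : Type*} [CommRing R] [Ring A]
    [Algebra R A] [Group G] (H : Subgroup G) [Fintype (G ⧸ H)]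
    (α : G →* (A ≃ₐ[R] A)) (s : G ⧸ H → G) (hs : SkewHecke.IsSection s) :
    let J : (G ⧸ H → R) → (G ⧸ H → A) := fun φ x => algebraMap R A (φ x)
    -- `J` maps the Hecke algebra into the skew Hecke algebra
    (∀ φ : G ⧸ H → R, SkewHecke.IsInv H (1 : G →* (R ≃ₐ[R] R)) φ →
      SkewHecke.IsInv H α (J φ)) ∧
    -- `J` is `R`-linear
    (∀ φ ψ : G ⧸ H → R, J (φ + ψ) = J φ + J ψ) ∧
    (∀ (r : R) (φ : G ⧸ H → R), J (r • φ) = r • J φ) ∧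
    -- `J` is multiplicative and unital
    (∀ φ ψ : G ⧸ H → R, SkewHecke.IsInv H (1 : G →* (R ≃ₐ[R] R)) φ →
      SkewHecke.IsInv H (1 : G →* (R ≃ₐ[R] R)) ψ →
      J (SkewHecke.conv H (1 : G →* (R ≃ₐ[R] R)) s φ ψ) =
        SkewHecke.conv H α s (J φ) (J ψ)) ∧
    J (SkewHecke.delta H (1 : R)) = SkewHecke.delta H (1 : A) ∧
    -- `J` is injective whenever `A` is a faithful `R`-module
    ((∀ r : R, (∀ a : A, r • a = 0) → r = 0) → Function.Injective J) :=
  hecke_to_skewHecke_embedding_general H α s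
end

section
/- There is an R-algebra isomorphism from the skew Hecke algebra H_R(G,H,A,α) onto the opposite algebra End_{A⋊G}(A[G/H])^op of the endomorphism ring of the A⋊G-module A[G/H], given by Φ ↦ Φ(1_A·H). -/
/-!
An `A ⋊ G`-linear endomorphism `Φ` of `A[G/H]` is determined by `m = Φ(1_A·H)`, because
`a·cH = a·(s c)·(1_A·H)` gives `Φ(a·cH) = a·α_{s c}(m)`; and `m` is `H`-invariant since `H` fixes
`1_A·H`. Conversely, for `H`-invariant `m` the same formula defines an `A ⋊ G`-linear map: `α_g(m)`
depends only on the coset `gH`, so the choice of section does not matter. Evaluating `Ψ ∘ Φ`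
at `1_A·H` with this formula for `Ψ` is literally the skew Hecke product of `Φ(1_A·H)` and
`Ψ(1_A·H)`, in that order, whence the opposite algebra.
-/

open scoped BigOperators

/-- The action of `g ∈ G` on `A[G/H]`, determined by `b·kH ↦ α_g(b)·(gkH)`.
Together with the `A`-module structure this is the `A ⋊ G`-module structure
`(a ⊗ g)·(b·kH) = a α_g(b)·(gkH)` on `A[G/H]`. -/
noncomputable def SkewHecke.gAct {R A G : Type*} [CommRing R] [Ring A] [Algebra R A]
    [Group G] (H : Subgroup G) (α : G →* (A ≃ₐ[R] A)) (g : G)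
    (m : (G ⧸ H) →₀ A) : (G ⧸ H) →₀ A :=
  m.sum fun c a => Finsupp.single (g • c) (α g a)

/-- The skew Hecke product on `A[G/H]^H`:
`(Σ a_{gH} gH)(Σ b_{kH} kH) = Σ a_{gH} α_g(b_{kH}) (gkH)`. -/
noncomputable def SkewHecke.prodF {R A G : Type*} [CommRing R] [Ring A] [Algebra R A]
    [Group G] (H : Subgroup G) [Fintype (G ⧸ H)] (α : G →* (A ≃ₐ[R] A))
    (s : G ⧸ H → G) (m n : (G ⧸ H) →₀ A) : (G ⧸ H) →₀ A :=
  ∑ c : G ⧸ H, ∑ d : G ⧸ H, Finsupp.single ((s c) • d) (m c * α (s c) (n d))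

namespace SkewHecke

variable {R A G : Type*} [CommRing R] [Ring A] [Algebra R A] [Group G]
  (H : Subgroup G) (α : G →* (A ≃ₐ[R] A))

noncomputable def basept : (G ⧸ H) →₀ A := Finsupp.single (QuotientGroup.mk (1 : G)) 1

/-- `A ⋊ G`-linearity of an `A`-linear endomorphism of `A[G/H]`. -/
def IsEquivariant (Φ : ((G ⧸ H) →₀ A) →ₗ[A] ((G ⧸ H) →₀ A)) : Prop :=
  ∀ (g : G) (m : (G ⧸ H) →₀ A), Φ (gAct H α g m) = gAct H α g (Φ m)

def invariants : Set ((G ⧸ H) →₀ A) := {m | ∀ h ∈ H, gAct H α h m = m}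

lemma gAct_single (g : G) (c : G ⧸ H) (a : A) :
    gAct H α g (Finsupp.single c a) = Finsupp.single (g • c) (α g a) := by
  rw [gAct, Finsupp.sum_single_index]
  simp

lemma gAct_zero (g : G) : gAct H α g 0 = 0 := by simp [gAct]

lemma gAct_add (g : G) (m n : (G ⧸ H) →₀ A) :
    gAct H α g (m + n) = gAct H α g m + gAct H α g n := by
  unfold gAct
  rw [Finsupp.sum_add_index'] <;> simp [Finsupp.single_add]

lemma gAct_smul (g : G) (a : A) (m : (G ⧸ H) →₀ A) :
    gAct H α g (a • m) = α g a • gAct H α g m := by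
  induction m using Finsupp.induction_linear with
  | zero => simp [gAct_zero]
  | add m n hm hn => rw [smul_add, gAct_add, gAct_add, smul_add, hm, hn]
  | single c b =>
    rw [Finsupp.smul_single, gAct_single, gAct_single, Finsupp.smul_single, smul_eq_mul,
      smul_eq_mul, map_mul]

lemma gAct_gAct (g k : G) (m : (G ⧸ H) →₀ A) :
    gAct H α g (gAct H α k m) = gAct H α (g * k) m := by
  induction m using Finsupp.induction_linear with
  | zero => simp [gAct_zero]
  | add m n hm hn => rw [gAct_add, gAct_add, gAct_add, hm, hn]
  | single c b => simp [gAct_single, smul_smul]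

lemma gAct_one (m : (G ⧸ H) →₀ A) : gAct H α 1 m = m := by
  simp [gAct]

lemma gAct_eq_sum [Fintype (G ⧸ H)] (g : G) (m : (G ⧸ H) →₀ A) :
    gAct H α g m = ∑ d : G ⧸ H, Finsupp.single (g • d) (α g (m d)) :=
  Finsupp.sum_fintype _ _ fun d => by simp

lemma gAct_basept (g : G) : gAct H α g (basept H) = Finsupp.single (QuotientGroup.mk g) 1 := by
  simp [basept, gAct_single]

lemma gAct_eq_of_mk_eq {m : (G ⧸ H) →₀ A} (hm : m ∈ invariants H α) {g k : G}
    (hgk : (QuotientGroup.mk g : G ⧸ H) = QuotientGroup.mk k) :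
    gAct H α g m = gAct H α k m := by
  rw [show g = k * (k⁻¹ * g) by group, ← gAct_gAct, hm _ (QuotientGroup.eq.mp hgk.symm)]

variable {H α}

lemma IsEquivariant.apply_basept_mem_invariants {Φ : ((G ⧸ H) →₀ A) →ₗ[A] ((G ⧸ H) →₀ A)}
    (hΦ : IsEquivariant H α Φ) : Φ (basept H) ∈ invariants H α := by
  intro h hh
  have hcoset : (QuotientGroup.mk h : G ⧸ H) = QuotientGroup.mk 1 :=
    QuotientGroup.eq.mpr (by simpa using hh)
  rw [← hΦ, gAct_basept, hcoset]
  rfl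

lemma IsEquivariant.eq_linearCombination {s : G ⧸ H → G} (hs : IsSection s)
    {Φ : ((G ⧸ H) →₀ A) →ₗ[A] ((G ⧸ H) →₀ A)} (hΦ : IsEquivariant H α Φ) :
    Φ = Finsupp.linearCombination A (fun c => gAct H α (s c) (Φ (basept H))) := by
  refine Finsupp.lhom_ext fun c a => ?_
  have hsingle : Finsupp.single c a = a • gAct H α (s c) (basept H) := by
    rw [gAct_basept, hs, Finsupp.smul_single, smul_eq_mul, mul_one]
  rw [Finsupp.linearCombination_single, hsingle, map_smul, hΦ]

lemma linearCombination_isEquivariant {s : G ⧸ H → G} (hs : IsSection s)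
    {m : (G ⧸ H) →₀ A} (hm : m ∈ invariants H α) :
    IsEquivariant H α (Finsupp.linearCombination A (fun c => gAct H α (s c) m)) := by
  intro g n
  induction n using Finsupp.induction_linear with
  | zero => simp [gAct_zero]
  | add n₁ n₂ h₁ h₂ => rw [gAct_add, map_add, map_add, gAct_add, h₁, h₂]
  | single c a =>
    have hcoset : (QuotientGroup.mk (s (g • c)) : G ⧸ H) = QuotientGroup.mk (g * s c) := by
      rw [hs, ← smul_eq_mul, ← MulAction.Quotient.smul_mk, hs]
    simp only [gAct_single, Finsupp.linearCombination_single, gAct_smul, gAct_gAct,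
      gAct_eq_of_mk_eq H α hm hcoset]

lemma linearCombination_basept {s : G ⧸ H → G} (hs : IsSection s)
    {m : (G ⧸ H) →₀ A} (hm : m ∈ invariants H α) :
    Finsupp.linearCombination A (fun c => gAct H α (s c) m) (basept H) = m := by
  rw [basept, Finsupp.linearCombination_single, one_smul,
    gAct_eq_of_mk_eq H α hm (hs _), gAct_one]

lemma prodF_eq_linearCombination [Fintype (G ⧸ H)] (s : G ⧸ H → G) (u v : (G ⧸ H) →₀ A) :
    prodF H α s u v = Finsupp.linearCombination A (fun c => gAct H α (s c) v) u := by
  rw [Finsupp.linearCombination_apply, Finsupp.sum_fintype _ _ (by simp), prodF]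
  refine Finset.sum_congr rfl fun c _ => ?_
  simp only [gAct_eq_sum, Finset.smul_sum, Finsupp.smul_single, smul_eq_mul]

end SkewHecke

open SkewHecke in
/-- The map `Φ ↦ Φ(1_A·H)` is an `R`-algebra isomorphism from the skew Hecke algebra,
realised as `A[G/H]^H` with the product `prodF`, onto `End_{A⋊G}(A[G/H])^op`; the
`A ⋊ G`-linear endomorphisms of `A[G/H]` are the `A`-linear `G`-equivariant ones. -/
theorem skewHecke_iso_endomorphism_algebra_op {R A G : Type*} [CommRing R] [Ring A]
    [Algebra R A] [Group G] (H : Subgroup G) [Fintype (G ⧸ H)]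
    (α : G →* (A ≃ₐ[R] A)) (s : G ⧸ H → G) (hs : SkewHecke.IsSection s) :
    let e : (((G ⧸ H) →₀ A) →ₗ[A] ((G ⧸ H) →₀ A)) → ((G ⧸ H) →₀ A) :=
      fun Φ => Φ (Finsupp.single (QuotientGroup.mk (1 : G)) (1 : A))
    -- `e` is a bijection from `End_{A⋊G}(A[G/H])` onto the `H`-invariants `A[G/H]^H`
    Set.BijOn e {Φ | ∀ (g : G) (m : (G ⧸ H) →₀ A),
        Φ (SkewHecke.gAct H α g m) = SkewHecke.gAct H α g (Φ m)}
      {m | ∀ h ∈ H, SkewHecke.gAct H α h m = m} ∧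
    -- `e` is `R`-linear
    (∀ Φ Ψ : ((G ⧸ H) →₀ A) →ₗ[A] ((G ⧸ H) →₀ A), e (Φ + Ψ) = e Φ + e Ψ) ∧
    -- `e` reverses products: it is an isomorphism onto the *opposite* algebra
    (∀ Φ Ψ : ((G ⧸ H) →₀ A) →ₗ[A] ((G ⧸ H) →₀ A),
      (∀ (g : G) (m : (G ⧸ H) →₀ A),
        Φ (SkewHecke.gAct H α g m) = SkewHecke.gAct H α g (Φ m)) →
      (∀ (g : G) (m : (G ⧸ H) →₀ A),
        Ψ (SkewHecke.gAct H α g m) = SkewHecke.gAct H α g (Ψ m)) →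
      e (Ψ.comp Φ) = SkewHecke.prodF H α s (e Φ) (e Ψ)) ∧
    -- `e` is unital
    e LinearMap.id = Finsupp.single (QuotientGroup.mk (1 : G)) (1 : A) := by
  intro e
  refine ⟨⟨fun Φ hΦ => IsEquivariant.apply_basept_mem_invariants hΦ, ?_, ?_⟩,
    fun Φ Ψ => rfl, ?_, rfl⟩
  · intro Φ hΦ Ψ hΨ hΦΨ
    rw [IsEquivariant.eq_linearCombination hs hΦ, IsEquivariant.eq_linearCombination hs hΨ]
    exact congrArg _ (funext fun c => congrArg _ hΦΨ)
  · exact fun m hm => ⟨_, linearCombination_isEquivariant hs hm, linearCombination_basept hs hm⟩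
  · intro Φ Ψ _ hΨ
    change Ψ (Φ (basept H)) = prodF H α s (Φ (basept H)) (Ψ (basept H))
    rw [prodF_eq_linearCombination, ← IsEquivariant.eq_linearCombination hs hΨ]
end

section
/- The map a ↦ Σ_{gH ∈ G/H} α_g(a) ⊗ E_{gH,gH} is an injective R-algebra homomorphism from A^H into (A ⊗ End_R(R[G/H]))^G, where E_{gH,gH} is the projection onto the basis element gH. -/
open scoped BigOperators TensorProduct

/-- Left translation by `g` on the free module `R[G/H]`. -/
noncomputable def SkewHecke.P (R : Type*) {G : Type*} [CommRing R] [Group G]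
    (H : Subgroup G) (g : G) : ((G ⧸ H) →₀ R) →ₗ[R] ((G ⧸ H) →₀ R) :=
  Finsupp.lmapDomain R R (fun c => g • c)

/-- The matrix unit `E_{c,d} : R[G/H] → R[G/H]`. -/
noncomputable def SkewHecke.matUnit (R : Type*) {G : Type*} [CommRing R] [Group G]
    (H : Subgroup G) (c d : G ⧸ H) : Module.End R ((G ⧸ H) →₀ R) :=
  (Finsupp.lsingle c).comp (Finsupp.lapply d)

/-- Conjugation by `g` on `End_R(R[G/H])`, `T ↦ P_g ∘ T ∘ P_{g⁻¹}`. -/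
noncomputable def SkewHecke.conjE (R : Type*) {G : Type*} [CommRing R] [Group G]
    (H : Subgroup G) (g : G) :
    Module.End R ((G ⧸ H) →₀ R) →ₗ[R] Module.End R ((G ⧸ H) →₀ R) :=
  (LinearMap.llcomp R _ _ _ (SkewHecke.P R H g)).comp
    (LinearMap.lcomp R _ (SkewHecke.P R H g⁻¹))

/-- The diagonal action of `g` on `A ⊗ End_R(R[G/H])`. -/
noncomputable def SkewHecke.actTE {R A G : Type*} [CommRing R] [Ring A] [Algebra R A]
    [Group G] (H : Subgroup G) (α : G →* (A ≃ₐ[R] A)) (g : G) :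
    (A ⊗[R] Module.End R ((G ⧸ H) →₀ R)) →ₗ[R]
      (A ⊗[R] Module.End R ((G ⧸ H) →₀ R)) :=
  TensorProduct.map (α g).toLinearMap (SkewHecke.conjE R H g)

/-!
Since the `E_{c,c}` are orthogonal idempotents summing to `1`, `a ↦ Σ_c α_{s c}(a) ⊗ E_{c,c}` is
an algebra map for any choice of representatives `s`, and it is injective because the `(c, c)`
entry of the image is `α_{s c}(a)`. Conjugation by `g` sends `E_{c,c}` to `E_{gc,gc}`, so `g` turns
the map built from `s` into the one built from the representatives `c ↦ g s(g⁻¹c)`; on `A^H` the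
map does not depend on the representatives, whence `G`-invariance.
-/

namespace SkewHecke

variable {R G : Type*} [CommRing R] [Group G] {H : Subgroup G}

theorem matUnit_mul_matUnit [DecidableEq (G ⧸ H)] (a b c d : G ⧸ H) :
    matUnit R H a b * matUnit R H c d = if b = c then matUnit R H a d else 0 := by
  ext f x
  split_ifs with h
  · subst h
    simp [matUnit, Module.End.mul_apply]
  · simp [matUnit, Module.End.mul_apply, Finsupp.single_apply, Ne.symm h]

theorem sum_matUnit_self [Fintype (G ⧸ H)] : ∑ c : G ⧸ H, matUnit R H c c = 1 := by
  classical
  ext f x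
  simp [matUnit, Finsupp.single_apply, Finset.sum_apply']

theorem conjE_matUnit (g : G) (c d : G ⧸ H) :
    conjE R H g (matUnit R H c d) = matUnit R H (g • c) (g • d) := by
  refine Finsupp.lhom_ext fun e r => ?_
  ext x
  classical
  simp [conjE, matUnit, P, Finsupp.single_apply, inv_smul_eq_iff]

theorem isSection_translate {s : G ⧸ H → G} (hs : IsSection s) (g : G) :
    IsSection fun c => g * s (g⁻¹ • c) := fun c => by
  change g • ((s (g⁻¹ • c) : G) : G ⧸ H) = c
  rw [hs, smul_inv_smul]

variable {A : Type*} [Ring A] [Algebra R A] (α : G →* (A ≃ₐ[R] A))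

theorem apply_eq_of_mk_eq {a : A} (ha : ∀ h ∈ H, α h a = a) {g g' : G}
    (hg : (g : G ⧸ H) = g') : α g a = α g' a := by
  obtain ⟨h, hh, rfl⟩ : ∃ h ∈ H, g = g' * h :=
    ⟨g'⁻¹ * g, QuotientGroup.eq.mp hg.symm, by group⟩
  rw [map_mul, AlgEquiv.mul_apply, ha h hh]

theorem actTE_tmul_matUnit (g : G) (a : A) (c d : G ⧸ H) :
    actTE H α g (a ⊗ₜ matUnit R H c d) = α g a ⊗ₜ matUnit R H (g • c) (g • d) := by
  simp [actTE, conjE_matUnit]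

noncomputable def diagEntry (c : G ⧸ H) : A ⊗[R] Module.End R ((G ⧸ H) →₀ R) →ₗ[R] A :=
  TensorProduct.rid R A ∘ₗ
    LinearMap.lTensor A (Finsupp.lapply c ∘ₗ LinearMap.applyₗ (Finsupp.single c 1))

theorem diagEntry_tmul_matUnit [DecidableEq (G ⧸ H)] (a : A) (c d : G ⧸ H) :
    diagEntry c (a ⊗ₜ matUnit R H d d) = if d = c then a else 0 := by
  split_ifs with h
  · subst h
    simp [diagEntry, matUnit]
  · simp [diagEntry, matUnit, h]

variable [Fintype (G ⧸ H)]

noncomputable def diagHom (s : G ⧸ H → G) :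
    A →ₐ[R] A ⊗[R] Module.End R ((G ⧸ H) →₀ R) where
  toFun a := ∑ c, α (s c) a ⊗ₜ matUnit R H c c
  map_one' := by
    simp only [map_one, ← TensorProduct.tmul_sum, sum_matUnit_self, Algebra.TensorProduct.one_def]
  map_mul' a b := by
    classical
    simp [Finset.sum_mul_sum, Algebra.TensorProduct.tmul_mul_tmul, matUnit_mul_matUnit,
      TensorProduct.tmul_ite]
  map_zero' := by simp
  map_add' a b := by simp [TensorProduct.add_tmul, Finset.sum_add_distrib]
  commutes' r := by
    simp [← TensorProduct.tmul_sum, sum_matUnit_self, Algebra.TensorProduct.algebraMap_apply]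

theorem diagHom_apply (s : G ⧸ H → G) (a : A) :
    diagHom α s a = ∑ c, α (s c) a ⊗ₜ matUnit R H c c := rfl

theorem diagEntry_diagHom (s : G ⧸ H → G) (a : A) (c : G ⧸ H) :
    diagEntry c (diagHom α s a) = α (s c) a := by
  classical
  simp [diagHom_apply, diagEntry_tmul_matUnit]

theorem diagHom_injective (s : G ⧸ H → G) : Function.Injective (diagHom α s) := by
  intro a b hab
  simpa [diagEntry_diagHom] using congrArg (diagEntry (R := R) (QuotientGroup.mk 1 : G ⧸ H)) hab

theorem diagHom_congr_section {s t : G ⧸ H → G} (hs : IsSection s) (ht : IsSection t)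
    {a : A} (ha : ∀ h ∈ H, α h a = a) : diagHom α s a = diagHom α t a :=
  Finset.sum_congr rfl fun c _ => by
    rw [apply_eq_of_mk_eq α ha ((hs c).trans (ht c).symm)]

theorem actTE_diagHom (g : G) (s : G ⧸ H → G) (a : A) :
    actTE H α g (diagHom α s a) = diagHom α (fun c => g * s (g⁻¹ • c)) a := by
  simp only [diagHom_apply, map_sum, actTE_tmul_matUnit, map_mul, AlgEquiv.mul_apply]
  exact Fintype.sum_equiv (MulAction.toPerm g) _ _ fun c => by simp

end SkewHecke

/-- The map `a ↦ Σ_{gH} α_g(a) ⊗ E_{gH,gH}` is an injective `R`-algebra homomorphism from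
`A^H` into `(A ⊗ End_R(R[G/H]))^G`; it is independent of the choice of representatives. -/
theorem fixed_to_tensor_end_invariants {R A G : Type*} [CommRing R] [Ring A]
    [Algebra R A] [Group G] (H : Subgroup G) [Fintype (G ⧸ H)]
    (α : G →* (A ≃ₐ[R] A)) (s : G ⧸ H → G) (hs : SkewHecke.IsSection s) :
    let F : A → (A ⊗[R] Module.End R ((G ⧸ H) →₀ R)) :=
      fun a => ∑ c : G ⧸ H, α (s c) a ⊗ₜ[R] SkewHecke.matUnit R H c c
    -- `F` is independent of the choice of coset representatives on `A^H`
    (∀ (t : G ⧸ H → G), SkewHecke.IsSection t → ∀ a : A, (∀ h ∈ H, α h a = a) →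
      F a = ∑ c : G ⧸ H, α (t c) a ⊗ₜ[R] SkewHecke.matUnit R H c c) ∧
    -- `F` takes values in the `G`-invariants
    (∀ a : A, (∀ h ∈ H, α h a = a) → ∀ g : G, SkewHecke.actTE H α g (F a) = F a) ∧
    -- `F` is an injective `R`-algebra homomorphism on `A^H`
    Set.InjOn F {a | ∀ h ∈ H, α h a = a} ∧
    (∀ a b : A, F (a + b) = F a + F b) ∧
    (∀ (r : R) (a : A), F (r • a) = r • F a) ∧
    (∀ a b : A, (∀ h ∈ H, α h a = a) → (∀ h ∈ H, α h b = b) → F (a * b) = F a * F b) ∧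
    F 1 = 1 := by
  intro F
  have hF : F = SkewHecke.diagHom α s := rfl
  rw [hF]
  refine ⟨fun t ht a ha => SkewHecke.diagHom_congr_section α hs ht ha,
    fun a ha g => ?_, (SkewHecke.diagHom_injective α s).injOn, map_add _, map_smul _,
    fun a b _ _ => map_mul _ a b, map_one _⟩
  rw [SkewHecke.actTE_diagHom]
  exact SkewHecke.diagHom_congr_section α (SkewHecke.isSection_translate hs g) hs ha
end

section
/- Let RG be the commutative algebra of R-valued functions on G with G-action (α_g f)(k) = f(g⁻¹k). Then the skew Hecke algebra H_R(G,H,RG,α) is isomorphic as an R-algebra to End_R(R[G/H]), hence to the matrix algebra M_n(R) with n = |G/H|. -/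
open scoped BigOperators

/-!
Write `[x]` for the coset of `x`. An `H`-invariant `φ : G ⧸ H → (G → R)` is determined by its
matrix `M x y = φ (g⁻¹ • y) g⁻¹`, where `g` is any representative of `x`: invariance makes the
value independent of the representative, and conversely `φ c k = M [k⁻¹] (k⁻¹ • c)` defines an
invariant function for every matrix `M`. Under this correspondence the twisted convolution
becomes matrix multiplication (reindex the sum by `c ↦ s x • c`) and `delta 1` the identity
matrix. Composing with the identification of `End_R(R[G/H])` with matrices in the basis of
single cosets gives the isomorphism.
-/

namespace SkewHecke

open MulAction QuotientGroup

variable {R G : Type*} [CommRing R] [Group G] {H : Subgroup G}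

def toMatrix (s : G ⧸ H → G) : (G ⧸ H → G → R) →ₗ[R] Matrix (G ⧸ H) (G ⧸ H) R where
  toFun φ := Matrix.of fun x y => φ ((s x)⁻¹ • y) (s x)⁻¹
  map_add' _ _ := rfl
  map_smul' _ _ := rfl

@[simp]
theorem toMatrix_apply (s : G ⧸ H → G) (φ : G ⧸ H → G → R) (x y : G ⧸ H) :
    toMatrix s φ x y = φ ((s x)⁻¹ • y) (s x)⁻¹ :=
  rfl

def ofMatrix (M : Matrix (G ⧸ H) (G ⧸ H) R) : G ⧸ H → G → R :=
  fun c k => M (k⁻¹ : G) (k⁻¹ • c)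

def IsTranslation (α : G →* ((G → R) ≃ₐ[R] (G → R))) : Prop :=
  ∀ (g : G) (f : G → R) (k : G), α g f k = f (g⁻¹ * k)

variable {α : G →* ((G → R) ≃ₐ[R] (G → R))}

theorem IsInv.apply_smul_mul (hα : IsTranslation α) {φ : G ⧸ H → G → R} (hφ : IsInv H α φ)
    {h : G} (hh : h ∈ H) (c : G ⧸ H) (k : G) : φ (h • c) (h * k) = φ c k := by
  obtain ⟨g, rfl⟩ := mk_surjective c
  rw [Quotient.smul_mk, smul_eq_mul, hφ h hh g, hα, inv_mul_cancel_left]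

theorem IsInv.apply_inv_smul_eq (hα : IsTranslation α) {φ : G ⧸ H → G → R} (hφ : IsInv H α φ)
    {g g' : G} (hg : (g : G ⧸ H) = g') (y : G ⧸ H) : φ (g⁻¹ • y) g⁻¹ = φ (g'⁻¹ • y) g'⁻¹ := by
  have hh : g'⁻¹ * g ∈ H := QuotientGroup.eq.mp hg.symm
  rw [← hφ.apply_smul_mul hα hh (g⁻¹ • y) g⁻¹, smul_smul, mul_inv_cancel_right]

theorem toMatrix_apply_of_mk_eq (hα : IsTranslation α) {s : G ⧸ H → G} (hs : IsSection s)
    {φ : G ⧸ H → G → R} (hφ : IsInv H α φ) {g : G} {x : G ⧸ H} (hg : (g : G ⧸ H) = x)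
    (y : G ⧸ H) : toMatrix s φ x y = φ (g⁻¹ • y) g⁻¹ :=
  hφ.apply_inv_smul_eq hα ((hs x).trans hg.symm) y

theorem isInv_ofMatrix (hα : IsTranslation α) (M : Matrix (G ⧸ H) (G ⧸ H) R) :
    IsInv H α (ofMatrix M) := by
  intro h hh g
  funext k
  rw [hα, ofMatrix, ofMatrix, mul_inv_rev, inv_inv, mk_mul_of_mem k⁻¹ hh, Quotient.smul_mk,
    Quotient.smul_mk, smul_eq_mul, smul_eq_mul, mul_assoc]

theorem ofMatrix_toMatrix (hα : IsTranslation α) {s : G ⧸ H → G} (hs : IsSection s)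
    {φ : G ⧸ H → G → R} (hφ : IsInv H α φ) : ofMatrix (toMatrix s φ) = φ := by
  funext c k
  rw [ofMatrix, toMatrix_apply_of_mk_eq hα hs hφ rfl, inv_inv, smul_inv_smul]

theorem toMatrix_ofMatrix {s : G ⧸ H → G} (hs : IsSection s) (M : Matrix (G ⧸ H) (G ⧸ H) R) :
    toMatrix s (ofMatrix M) = M := by
  ext x y
  rw [toMatrix_apply, ofMatrix, inv_inv, smul_inv_smul, hs]

theorem toMatrix_conv [Fintype (G ⧸ H)] (hα : IsTranslation α) {s : G ⧸ H → G}
    (hs : IsSection s) (φ : G ⧸ H → G → R) {ψ : G ⧸ H → G → R} (hψ : IsInv H α ψ) :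
    toMatrix s (conv H α s φ ψ) = toMatrix s φ * toMatrix s ψ := by
  ext x y
  rw [Matrix.mul_apply, toMatrix_apply, conv, Finset.sum_apply]
  refine Fintype.sum_equiv (toPerm (s x)) _ _ fun c => ?_
  have hd : ((s x * s c : G) : G ⧸ H) = s x • c := congrArg (s x • ·) (hs c)
  rw [toPerm_apply, toMatrix_apply, inv_smul_smul, toMatrix_apply_of_mk_eq hα hs hψ hd,
    Pi.mul_apply, hα, mul_inv_rev, mul_smul]

theorem toMatrix_delta_one [DecidableEq (G ⧸ H)] {s : G ⧸ H → G} (hs : IsSection s) :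
    toMatrix s (delta H (1 : G → R)) = 1 := by
  ext x y
  have hxy : (s x)⁻¹ • y = ((1 : G) : G ⧸ H) ↔ x = y := by
    rw [inv_smul_eq_iff, Quotient.smul_mk, smul_eq_mul, mul_one, hs, eq_comm]
  rw [toMatrix_apply, delta, Matrix.one_apply]
  split_ifs <;> simp_all

end SkewHecke

/-- For `RG` the commutative algebra of `R`-valued functions on `G` with the left
translation action `α`, the skew Hecke algebra `H_R(G,H,RG,α)` is isomorphic as an
`R`-algebra to `End_R(R[G/H])`, hence to the matrix algebra `M_n(R)`, `n = |G/H|`. -/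
theorem skewHecke_functions_iso_matrix {R G : Type*} [CommRing R] [Group G]
    (H : Subgroup G) [Fintype (G ⧸ H)] [DecidableEq (G ⧸ H)]
    (α : G →* ((G → R) ≃ₐ[R] (G → R)))
    (hα : ∀ (g : G) (f : G → R) (k : G), α g f k = f (g⁻¹ * k))
    (s : G ⧸ H → G) (hs : SkewHecke.IsSection s) :
    (∃ e : (G ⧸ H → (G → R)) → Module.End R ((G ⧸ H) →₀ R),
      -- `e` is a bijection from the skew Hecke algebra onto all of `End_R(R[G/H])`
      Set.BijOn e {φ | SkewHecke.IsInv H α φ} Set.univ ∧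
      -- `e` is `R`-linear on the skew Hecke algebra
      (∀ φ ψ, SkewHecke.IsInv H α φ → SkewHecke.IsInv H α ψ →
        e (φ + ψ) = e φ + e ψ) ∧
      (∀ (r : R) (φ), SkewHecke.IsInv H α φ → e (r • φ) = r • e φ) ∧
      -- `e` is multiplicative and unital
      (∀ φ ψ, SkewHecke.IsInv H α φ → SkewHecke.IsInv H α ψ →
        e (SkewHecke.conv H α s φ ψ) = e φ * e ψ) ∧
      e (SkewHecke.delta H (1 : G → R)) = 1) ∧
    -- hence the skew Hecke algebra is isomorphic to the matrix algebra `M_n(R)`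
    Nonempty (Module.End R ((G ⧸ H) →₀ R) ≃ₐ[R] Matrix (G ⧸ H) (G ⧸ H) R) := by
  open SkewHecke in
  let E := algEquivMatrix (R := R) (Finsupp.basisSingleOne (ι := G ⧸ H))
  refine ⟨⟨fun φ => E.symm (toMatrix s φ), ⟨fun _ _ => trivial, ?_, ?_⟩, ?_, ?_, ?_, ?_⟩, ⟨E⟩⟩
  · intro φ hφ ψ hψ hφψ
    rw [← ofMatrix_toMatrix hα hs hφ, ← ofMatrix_toMatrix hα hs hψ, E.symm.injective hφψ]
  · intro f _
    exact ⟨ofMatrix (E f), isInv_ofMatrix hα _, by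
      simp only [toMatrix_ofMatrix hs, E.symm_apply_apply]⟩
  · intro φ ψ _ _
    simp only [map_add]
  · intro r φ _
    simp only [map_smul]
  · intro φ ψ _ hψ
    simp only [toMatrix_conv hα hs φ hψ, map_mul]
  · simp only [toMatrix_delta_one hs, map_one]
end

section
/- If H and H' are conjugate subgroups of G, then the skew Hecke algebras H_R(G,H,A,α) and H_R(G,H',A,α) are isomorphic as R-algebras. -/
open scoped BigOperators

/-! Conjugation by `g` maps the cosets `xH` to the cosets `gxg⁻¹H'` and turns left
multiplication by `h ∈ H` into left multiplication by `ghg⁻¹ ∈ H'`. Hence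
`φ ↦ α g ∘ φ ∘ (conjugation)⁻¹` is an `R`-linear bijection between `H`-invariant and
`H'`-invariant functions. It respects convolution because, for an invariant right factor,
the convolution does not depend on the choice of coset representatives, and the representatives
`s'` of `G ⧸ H'` conjugate back to representatives of `G ⧸ H`. -/

namespace QuotientGroup

variable {G G' : Type*} [Group G] [Group G']

def mapMulEquiv (e : G ≃* G') (H : Subgroup G) : G ⧸ H ≃ G' ⧸ H.map e.toMonoidHom :=
  Quotient.congr e.toEquiv fun a b => by
    simp only [leftRel_apply, MulEquiv.toEquiv_eq_coe, EquivLike.coe_coe, ← map_inv, ← map_mul]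
    exact (Subgroup.mem_map_iff_mem e.injective).symm

variable (e : G ≃* G') (H : Subgroup G)

@[simp]
theorem mapMulEquiv_mk (x : G) : mapMulEquiv e H (x : G ⧸ H) = (e x : G' ⧸ H.map e.toMonoidHom) :=
  rfl

theorem mapMulEquiv_smul (g : G) (y : G ⧸ H) :
    mapMulEquiv e H (g • y) = e g • mapMulEquiv e H y := by
  induction y using QuotientGroup.induction_on with
  | H x => simp only [MulAction.Quotient.smul_mk, mapMulEquiv_mk, smul_eq_mul, map_mul]

end QuotientGroup

namespace SkewHecke

open QuotientGroup

variable {R A G : Type*} [CommRing R] [Ring A] [Algebra R A] [Group G] {H : Subgroup G}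
  (α : G →* (A ≃ₐ[R] A))

theorem isInv_iff_smul {φ : G ⧸ H → A} :
    IsInv H α φ ↔ ∀ h ∈ H, ∀ x : G ⧸ H, φ (h • x) = α h (φ x) := by
  simp only [IsInv, mk_surjective.forall, MulAction.Quotient.smul_mk, smul_eq_mul]

theorem conv_eq_of_isSection [Fintype (G ⧸ H)] {s t : G ⧸ H → G} (hs : IsSection s)
    (ht : IsSection t) {φ ψ : G ⧸ H → A} (hψ : IsInv H α ψ) :
    conv H α s φ ψ = conv H α t φ ψ := by
  funext x
  refine Finset.sum_congr rfl fun c _ => congrArg (φ c * ·) ?_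
  obtain ⟨k, hk, htc⟩ : ∃ k ∈ H, t c = s c * k :=
    ⟨_, QuotientGroup.eq.mp ((hs c).trans (ht c).symm), by group⟩
  rw [htc, mul_inv_rev, mul_smul, (isInv_iff_smul α).mp hψ _ (inv_mem hk), map_mul,
    AlgEquiv.mul_apply, ← AlgEquiv.mul_apply (α k), ← map_mul, mul_inv_cancel, map_one,
    AlgEquiv.one_apply]

theorem apply_conj_apply (g h : G) (a : A) :
    α (MulAut.conj g h) (α g a) = α g (α h a) := by
  rw [MulAut.conj_apply, ← AlgEquiv.mul_apply, ← map_mul, inv_mul_cancel_right, map_mul,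
    AlgEquiv.mul_apply]

variable (H) in
def conjTransport (g : G) :
    (G ⧸ H → A) ≃ₗ[R] (G ⧸ H.map (MulAut.conj g).toMonoidHom → A) :=
  (LinearEquiv.funCongrLeft R A (mapMulEquiv (MulAut.conj g) H).symm).trans
    (LinearEquiv.piCongrRight fun _ => (α g).toLinearEquiv)

variable (g : G)

@[simp]
theorem conjTransport_apply (φ : G ⧸ H → A) (y : G ⧸ H) :
    conjTransport H α g φ (mapMulEquiv (MulAut.conj g) H y) = α g (φ y) :=
  congrArg (α g ∘ φ) ((mapMulEquiv (MulAut.conj g) H).symm_apply_apply y)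

theorem conjTransport_apply_smul_iff (φ : G ⧸ H → A) (h : G) (y : G ⧸ H) :
    conjTransport H α g φ (MulAut.conj g h • mapMulEquiv (MulAut.conj g) H y) =
        α (MulAut.conj g h) (conjTransport H α g φ (mapMulEquiv (MulAut.conj g) H y)) ↔
      φ (h • y) = α h (φ y) := by
  rw [← mapMulEquiv_smul, conjTransport_apply, conjTransport_apply, apply_conj_apply,
    (α g).injective.eq_iff]

theorem isInv_conjTransport_iff {φ : G ⧸ H → A} :
    IsInv (H.map (MulAut.conj g).toMonoidHom) α (conjTransport H α g φ) ↔ IsInv H α φ := by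
  rw [isInv_iff_smul, isInv_iff_smul]
  refine ⟨fun hT h hh y => ?_, fun hφ k hk x => ?_⟩
  · exact (conjTransport_apply_smul_iff α g φ h y).mp
      (hT _ (Subgroup.mem_map_of_mem _ hh) _)
  · obtain ⟨h, hh, rfl⟩ := Subgroup.mem_map.mp hk
    obtain ⟨y, rfl⟩ := (mapMulEquiv (MulAut.conj g) H).surjective x
    exact (conjTransport_apply_smul_iff α g φ h y).mpr (hφ h hh y)

theorem conjTransport_conv [Fintype (G ⧸ H)] [Fintype (G ⧸ H.map (MulAut.conj g).toMonoidHom)]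
    {s : G ⧸ H → G} {s' : G ⧸ H.map (MulAut.conj g).toMonoidHom → G} (hs : IsSection s)
    (hs' : IsSection s') (φ : G ⧸ H → A) {ψ : G ⧸ H → A} (hψ : IsInv H α ψ) :
    conjTransport H α g (conv H α s φ ψ) =
      conv _ α s' (conjTransport H α g φ) (conjTransport H α g ψ) := by
  let t : G ⧸ H → G := fun c => (MulAut.conj g).symm (s' (mapMulEquiv (MulAut.conj g) H c))
  have ht : IsSection t := fun c => (mapMulEquiv (MulAut.conj g) H).injective <| by
    rw [mapMulEquiv_mk, MulEquiv.apply_symm_apply, hs']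
  have hst : ∀ c, s' (mapMulEquiv (MulAut.conj g) H c) = MulAut.conj g (t c) := fun c =>
    (MulEquiv.apply_symm_apply _ _).symm
  clear_value t
  rw [conv_eq_of_isSection α hs ht hψ]
  funext x
  obtain ⟨y, rfl⟩ := (mapMulEquiv (MulAut.conj g) H).surjective x
  rw [conjTransport_apply]
  simp only [conv, map_sum, ← (mapMulEquiv (MulAut.conj g) H).sum_comp]
  refine Finset.sum_congr rfl fun c _ => ?_
  rw [map_mul, conjTransport_apply, hst, ← map_inv (MulAut.conj g), ← mapMulEquiv_smul,
    conjTransport_apply, apply_conj_apply]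

theorem conjTransport_delta (a : A) :
    conjTransport H α g (delta H a) = delta _ (α g a) := by
  funext x
  obtain ⟨y, rfl⟩ := (mapMulEquiv (MulAut.conj g) H).surjective x
  have hy : mapMulEquiv (MulAut.conj g) H y = (1 : G) ↔ y = (1 : G) :=
    (mapMulEquiv (MulAut.conj g) H).injective.eq_iff' (by rw [mapMulEquiv_mk, map_one])
  simp only [conjTransport_apply, delta, apply_ite (α g), map_zero]
  congr 1
  exact propext hy.symm

end SkewHecke

/-- If `H` and `H'` are conjugate subgroups of `G`, then the skew Hecke algebras
`H_R(G,H,A,α)` and `H_R(G,H',A,α)` are isomorphic as `R`-algebras. -/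
theorem skewHecke_conjugate_subgroups_iso {R A G : Type*} [CommRing R] [Ring A]
    [Algebra R A] [Group G] (H H' : Subgroup G)
    [Fintype (G ⧸ H)] [Fintype (G ⧸ H')]
    (g₀ : G) (hconj : H' = Subgroup.map (MulAut.conj g₀).toMonoidHom H)
    (α : G →* (A ≃ₐ[R] A))
    (s : G ⧸ H → G) (hs : SkewHecke.IsSection s)
    (s' : G ⧸ H' → G) (hs' : SkewHecke.IsSection s') :
    ∃ E : (G ⧸ H → A) → (G ⧸ H' → A),
      -- `E` is a bijection between the two skew Hecke algebras
      Set.BijOn E {φ | SkewHecke.IsInv H α φ} {ψ | SkewHecke.IsInv H' α ψ} ∧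
      -- `E` is `R`-linear
      (∀ φ ψ, SkewHecke.IsInv H α φ → SkewHecke.IsInv H α ψ → E (φ + ψ) = E φ + E ψ) ∧
      (∀ (r : R) (φ), SkewHecke.IsInv H α φ → E (r • φ) = r • E φ) ∧
      -- `E` is multiplicative and unital
      (∀ φ ψ, SkewHecke.IsInv H α φ → SkewHecke.IsInv H α ψ →
        E (SkewHecke.conv H α s φ ψ) = SkewHecke.conv H' α s' (E φ) (E ψ)) ∧
      E (SkewHecke.delta H (1 : A)) = SkewHecke.delta H' (1 : A) := by
  subst hconj
  let E := SkewHecke.conjTransport H α g₀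
  refine ⟨E, E.toEquiv.bijOn fun φ => SkewHecke.isInv_conjTransport_iff α g₀,
    fun φ ψ _ _ => map_add E φ ψ, fun r φ _ => map_smul E r φ,
    fun φ ψ _ hψ => SkewHecke.conjTransport_conv α g₀ hs hs' φ hψ, ?_⟩
  rw [SkewHecke.conjTransport_delta, map_one]
end
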